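/- arXiv:2603.10243 — 2 statements merged into one kernel-verified Lean document; each statement's English description precedes it below -/
import Mathlib

section
/- Let p and q be probability mass functions on a finite set S with q(s) > 0 whenever p(s) > 0. Define the total variation distance TV(p,q) = (1/2)·Σ_{s∈S} |p(s) − q(s)|. Then Pinsker's inequality holds: TV(p,q) ≤ sqrt((1/2)·D_KL(p ‖ q)), where D_KL uses the natural logarithm. -/
/-- KL divergence of finitely supported pmfs (as real-valued functions),
with the convention `0 * log (0/q) = 0`. -/
noncomputable def KL {S : Type*} [Fintype S] (p q : S → ℝ) : ℝ :=
  ∑ s, if 0 < p s then p s * Real.log (p s / q s) else 0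

/-- Total variation distance between finitely supported pmfs. -/
noncomputable def TV {S : Type*} [Fintype S] (p q : S → ℝ) : ℝ :=
  (1 / 2) * ∑ s, |p s - q s|

/-!
For `t ≥ 0` one has `t log t - t + 1 ≥ (3/2)(t - 1)²/(t + 2)`: the difference vanishes together
with its derivative at `t = 1`, and it is convex because its second derivative is
`1/t - 27/(t + 2)³` and `(t + 2)³ - 27t = (t - 1)²(t + 8)`. Applied to `t = p(s)/q(s)`, scaled by
`q(s)` and summed, this gives `KL p q ≥ (3/2) ∑ (p - q)²/(p + 2q)`, and Cauchy–Schwarz against the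
weights `p + 2q`, which sum to `3`, gives `(∑ |p - q|)² ≤ 3 ∑ (p - q)²/(p + 2q)`.
-/

open Real Set InformationTheory

lemma hasDerivAt_klFun_sub_sq_div {x : ℝ} (hx : 0 < x) :
    HasDerivAt (fun t ↦ klFun t - 3 / 2 * ((t - 1) ^ 2 / (t + 2)))
      (log x - 3 / 2 * ((x - 1) * (x + 5) / (x + 2) ^ 2)) x := by
  have hq : HasDerivAt (fun t ↦ (t - 1) ^ 2 / (t + 2)) ((x - 1) * (x + 5) / (x + 2) ^ 2) x :=
    ((((hasDerivAt_id' x).sub_const 1).fun_pow 2).fun_div ((hasDerivAt_id' x).add_const 2)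
      (by positivity)).congr_deriv (by field_simp; ring)
  exact (hasDerivAt_klFun hx.ne').sub (hq.const_mul _)

lemma convexOn_klFun_sub_sq_div :
    ConvexOn ℝ (Ici 0) (fun t ↦ klFun t - 3 / 2 * ((t - 1) ^ 2 / (t + 2))) := by
  refine convexOn_of_hasDerivWithinAt2_nonneg (convex_Ici 0)
    (f'' := fun t ↦ t⁻¹ - 27 / (t + 2) ^ 3) ?_
    (fun x hx ↦ (hasDerivAt_klFun_sub_sq_div (by simpa using hx)).hasDerivWithinAt) ?_ ?_
  · refine continuous_klFun.continuousOn.sub (continuousOn_const.mul ?_)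
    exact ContinuousOn.div (by fun_prop) (by fun_prop) fun t (ht : 0 ≤ t) ↦ by positivity
  all_goals simp only [interior_Ici, mem_Ioi]
  · intro x hx
    have hq : HasDerivAt (fun t ↦ (t - 1) * (t + 5) / (t + 2) ^ 2) (18 / (x + 2) ^ 3) x :=
      ((((hasDerivAt_id' x).sub_const 1).fun_mul ((hasDerivAt_id' x).add_const 5)).fun_div
        (((hasDerivAt_id' x).add_const 2).fun_pow 2) (by positivity)).congr_deriv
        (by field_simp; ring)
    exact ((hasDerivAt_log hx.ne').sub (hq.const_mul (3 / 2))).hasDerivWithinAt.congr_deriv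
      (by ring)
  · intro x hx
    rw [sub_nonneg, div_le_iff₀ (by positivity), inv_mul_eq_div, le_div_iff₀ hx]
    nlinarith [mul_nonneg (sq_nonneg (x - 1)) (by linarith : (0 : ℝ) ≤ x + 8)]

lemma three_halves_mul_sq_div_le_klFun {t : ℝ} (ht : 0 ≤ t) :
    3 / 2 * ((t - 1) ^ 2 / (t + 2)) ≤ klFun t := by
  have hmin : IsMinOn (fun t ↦ klFun t - 3 / 2 * ((t - 1) ^ 2 / (t + 2))) (Ici 0) 1 := by
    refine convexOn_klFun_sub_sq_div.isMinOn_of_rightDeriv_eq_zero (by simp) ?_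
    simpa using ((hasDerivAt_klFun_sub_sq_div one_pos).hasDerivWithinAt (s := Ioi 1)).derivWithin
      (uniqueDiffWithinAt_Ioi 1)
  simpa [klFun_one] using hmin (mem_Ici.mpr ht)

lemma three_halves_mul_sq_div_le_mul_log_div {a b : ℝ} (ha : 0 ≤ a) (hb : 0 ≤ b)
    (hab : 0 < a → 0 < b) :
    3 / 2 * ((a - b) ^ 2 / (a + 2 * b)) ≤ a * log (a / b) + b - a := by
  obtain rfl | hb := hb.eq_or_lt
  · obtain rfl : a = 0 := by by_contra h; exact (hab (ha.lt_of_ne' h)).false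
    simp
  calc 3 / 2 * ((a - b) ^ 2 / (a + 2 * b)) = b * (3 / 2 * ((a / b - 1) ^ 2 / (a / b + 2))) := by
        field_simp
    _ ≤ b * klFun (a / b) := by gcongr; exact three_halves_mul_sq_div_le_klFun (by positivity)
    _ = a * log (a / b) + b - a := by rw [klFun_apply]; field_simp

lemma KL_eq_sum_mul_log_div {S : Type*} [Fintype S] {p : S → ℝ} (hp0 : ∀ s, 0 ≤ p s)
    (q : S → ℝ) : KL p q = ∑ s, p s * log (p s / q s) := by
  refine Finset.sum_congr rfl fun s _ ↦ ?_
  obtain hs | hs := (hp0 s).lt_or_eq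
  · rw [if_pos hs]
  · simp [← hs]

lemma three_halves_mul_sum_sq_div_le_KL {S : Type*} [Fintype S] {p q : S → ℝ}
    (hp0 : ∀ s, 0 ≤ p s) (hp1 : ∑ s, p s = 1) (hq0 : ∀ s, 0 ≤ q s) (hq1 : ∑ s, q s = 1)
    (hac : ∀ s, 0 < p s → 0 < q s) :
    3 / 2 * ∑ s, (p s - q s) ^ 2 / (p s + 2 * q s) ≤ KL p q := by
  calc 3 / 2 * ∑ s, (p s - q s) ^ 2 / (p s + 2 * q s)
      ≤ ∑ s, (p s * log (p s / q s) + q s - p s) := by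
        rw [Finset.mul_sum]
        exact Finset.sum_le_sum fun s _ ↦
          three_halves_mul_sq_div_le_mul_log_div (hp0 s) (hq0 s) (hac s)
    _ = KL p q := by
        simp only [add_sub_assoc, Finset.sum_add_distrib, Finset.sum_sub_distrib, hp1, hq1,
          sub_self, add_zero, KL_eq_sum_mul_log_div hp0]

lemma sq_sum_abs_sub_le_sum_sq_div_mul_sum {ι : Type*} (s : Finset ι) {p q : ι → ℝ}
    (hp0 : ∀ i, 0 ≤ p i) (hq0 : ∀ i, 0 ≤ q i) :
    (∑ i ∈ s, |p i - q i|) ^ 2 ≤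
      (∑ i ∈ s, (p i - q i) ^ 2 / (p i + 2 * q i)) * ∑ i ∈ s, (p i + 2 * q i) := by
  have hw : ∀ i, 0 ≤ p i + 2 * q i := fun i ↦ by linarith [hp0 i, hq0 i]
  refine Finset.sum_sq_le_sum_mul_sum_of_sq_le_mul s
    (fun i _ ↦ div_nonneg (sq_nonneg _) (hw i)) (fun i _ ↦ hw i) fun i _ ↦ ?_
  obtain h | h := (hw i).eq_or_lt
  · have hpq : p i = q i := by linarith [hp0 i, hq0 i]
    simp [hpq]
  · rw [sq_abs, div_mul_cancel₀ _ h.ne']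

theorem pinsker_inequality
    {S : Type*} [Fintype S] (p q : S → ℝ)
    (hp0 : ∀ s, 0 ≤ p s) (hp1 : ∑ s, p s = 1)
    (hq0 : ∀ s, 0 ≤ q s) (hq1 : ∑ s, q s = 1)
    (hac : ∀ s, 0 < p s → 0 < q s) :
    TV p q ≤ Real.sqrt ((1 / 2) * KL p q) := by
  have hweights : ∑ s, (p s + 2 * q s) = 3 := by
    rw [Finset.sum_add_distrib, ← Finset.mul_sum, hp1, hq1]; norm_num
  refine (le_abs_self _).trans (Real.abs_le_sqrt ?_)
  calc TV p q ^ 2 = (∑ s, |p s - q s|) ^ 2 / 4 := by rw [TV]; ring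
    _ ≤ (∑ s, (p s - q s) ^ 2 / (p s + 2 * q s)) * 3 / 4 := by
        rw [← hweights]
        gcongr
        exact sq_sum_abs_sub_le_sum_sq_div_mul_sum _ hp0 hq0
    _ ≤ 1 / 2 * KL p q := by linarith [three_halves_mul_sum_sq_div_le_KL hp0 hp1 hq0 hq1 hac]
end

section
/- Let p, q be pmfs on a finite set S with q(s) > 0 for all s in the support of p. Then TV(p,q) ≤ sqrt(1 − exp(−D_KL(p ‖ q))), and hence also TV(p,q) ≤ sqrt(D_KL(p ‖ q)) (a weaker but simpler Pinsker-type bound, since 1 − e^{−t} ≤ t for t ≥ 0). -/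
open Finset Real

section Jensen

variable {ι : Type*}

theorem sum_mul_log_div_le_log_sum (t : Finset ι) {w x : ι → ℝ}
    (hw : ∀ i ∈ t, 0 < w i) (hw1 : ∑ i ∈ t, w i = 1) (hx : ∀ i ∈ t, 0 < x i) :
    ∑ i ∈ t, w i * log (x i / w i) ≤ log (∑ i ∈ t, x i) := by
  have jensen := strictConcaveOn_log_Ioi.concaveOn.le_map_sum (fun i hi => (hw i hi).le) hw1
    (fun i hi => Set.mem_Ioi.mpr (div_pos (hx i hi) (hw i hi)))
  simp only [smul_eq_mul] at jensen
  refine jensen.trans_eq (congrArg log (sum_congr rfl fun i hi => ?_))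
  exact mul_div_cancel₀ (x i) (hw i hi).ne'

theorem log_min_div_add_log_max_div {a b : ℝ} (ha : 0 < a) (hb : 0 < b) :
    log (min a b / a) + log (max a b / a) = -log (a / b) := by
  have hprod : min a b / a * (max a b / a) = b / a := by
    rw [div_mul_div_comm, min_mul_max, mul_comm a b, mul_div_mul_right _ _ ha.ne']
  rw [← log_mul (div_pos (lt_min ha hb) ha).ne' (div_pos (lt_max_of_lt_left ha) ha).ne', hprod,
    log_div hb.ne' ha.ne', log_div ha.ne' hb.ne', neg_sub]

theorem exp_neg_sum_mul_log_div_le_sum_min_mul_sum_max (t : Finset ι) {p q : ι → ℝ}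
    (hp : ∀ i ∈ t, 0 < p i) (hp1 : ∑ i ∈ t, p i = 1) (hq : ∀ i ∈ t, 0 < q i) :
    exp (-∑ i ∈ t, p i * log (p i / q i)) ≤
      (∑ i ∈ t, min (p i) (q i)) * ∑ i ∈ t, max (p i) (q i) := by
  have hsplit : -∑ i ∈ t, p i * log (p i / q i) =
      ∑ i ∈ t, p i * log (min (p i) (q i) / p i) +
        ∑ i ∈ t, p i * log (max (p i) (q i) / p i) := by
    rw [← sum_add_distrib, ← sum_neg_distrib]
    refine sum_congr rfl fun i hi => ?_
    rw [← mul_add, log_min_div_add_log_max_div (hp i hi) (hq i hi), mul_neg]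
  have ht : t.Nonempty := nonempty_of_sum_ne_zero (hp1 ▸ one_ne_zero)
  have hmin : ∀ i ∈ t, 0 < min (p i) (q i) := fun i hi => lt_min (hp i hi) (hq i hi)
  have hmax : ∀ i ∈ t, 0 < max (p i) (q i) := fun i hi => lt_max_of_lt_left (hp i hi)
  calc exp (-∑ i ∈ t, p i * log (p i / q i))
      ≤ exp (log (∑ i ∈ t, min (p i) (q i)) + log (∑ i ∈ t, max (p i) (q i))) := by
        rw [exp_le_exp, hsplit]
        exact add_le_add (sum_mul_log_div_le_log_sum t hp hp1 hmin)
          (sum_mul_log_div_le_log_sum t hp hp1 hmax)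
    _ = (∑ i ∈ t, min (p i) (q i)) * ∑ i ∈ t, max (p i) (q i) := by
        rw [exp_add, exp_log (sum_pos hmin ht), exp_log (sum_pos hmax ht)]

end Jensen

section TotalVariation

variable {S : Type*} [Fintype S]

theorem sum_min_eq_half_sum_add_sum_sub_TV (p q : S → ℝ) :
    ∑ s, min (p s) (q s) = (∑ s, p s + ∑ s, q s) / 2 - TV p q := by
  have hmin : ∀ s, min (p s) (q s) = (p s + q s) / 2 - (1 / 2) * |p s - q s| := fun s => by
    linarith [min_add_max (p s) (q s), max_sub_min_eq_abs (p s) (q s), abs_sub_comm (p s) (q s)]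
  simp only [hmin, sum_sub_distrib, ← sum_div, sum_add_distrib, ← mul_sum, TV]

theorem sum_max_eq_half_sum_add_sum_add_TV (p q : S → ℝ) :
    ∑ s, max (p s) (q s) = (∑ s, p s + ∑ s, q s) / 2 + TV p q := by
  have hmax : ∀ s, max (p s) (q s) = (p s + q s) / 2 + (1 / 2) * |p s - q s| := fun s => by
    linarith [min_add_max (p s) (q s), max_sub_min_eq_abs (p s) (q s), abs_sub_comm (p s) (q s)]
  simp only [hmax, sum_add_distrib, ← sum_div, ← mul_sum, TV]

theorem sq_TV_le_one_sub_exp_neg_KL {p q : S → ℝ}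
    (hp0 : ∀ s, 0 ≤ p s) (hp1 : ∑ s, p s = 1)
    (hq0 : ∀ s, 0 ≤ q s) (hq1 : ∑ s, q s = 1)
    (hac : ∀ s, 0 < p s → 0 < q s) :
    TV p q ^ 2 ≤ 1 - exp (-KL p q) := by
  set t : Finset S := univ.filter (fun s => 0 < p s)
  have hpt : ∀ s ∈ t, 0 < p s := fun s hs => (mem_filter.mp hs).2
  have hp1t : ∑ s ∈ t, p s = 1 :=
    (sum_filter_of_ne fun s _ hs => (hp0 s).lt_of_ne' hs).trans hp1
  have hKL : KL p q = ∑ s ∈ t, p s * log (p s / q s) := by rw [KL, sum_filter]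
  have hmin : ∑ s ∈ t, min (p s) (q s) ≤ 1 - TV p q := by
    have h := sum_min_eq_half_sum_add_sum_sub_TV p q
    rw [hp1, hq1, add_self_div_two] at h
    exact h ▸ sum_le_sum_of_subset_of_nonneg (subset_univ t) fun s _ _ => le_min (hp0 s) (hq0 s)
  have hmax : ∑ s ∈ t, max (p s) (q s) ≤ 1 + TV p q := by
    have h := sum_max_eq_half_sum_add_sum_add_TV p q
    rw [hp1, hq1, add_self_div_two] at h
    exact h ▸ sum_le_sum_of_subset_of_nonneg (subset_univ t)
      fun s _ _ => le_max_of_le_left (hp0 s)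
  have hmin0 : 0 ≤ ∑ s ∈ t, min (p s) (q s) := sum_nonneg fun s _ => le_min (hp0 s) (hq0 s)
  have hmax0 : 0 ≤ ∑ s ∈ t, max (p s) (q s) := sum_nonneg fun s _ => le_max_of_le_left (hp0 s)
  have hBH : exp (-KL p q) ≤ (1 - TV p q) * (1 + TV p q) := hKL ▸
    (exp_neg_sum_mul_log_div_le_sum_min_mul_sum_max t hpt hp1t fun s hs => hac s (hpt s hs)).trans
      (mul_le_mul hmin hmax hmax0 (hmin0.trans hmin))
  linarith

end TotalVariation

theorem bretagnolle_huber
    {S : Type*} [Fintype S] (p q : S → ℝ)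
    (hp0 : ∀ s, 0 ≤ p s) (hp1 : ∑ s, p s = 1)
    (hq0 : ∀ s, 0 ≤ q s) (hq1 : ∑ s, q s = 1)
    (hac : ∀ s, 0 < p s → 0 < q s) :
    TV p q ≤ Real.sqrt (1 - Real.exp (-(KL p q))) ∧
    TV p q ≤ Real.sqrt (KL p q) := by
  have hTV := abs_le_sqrt (sq_TV_le_one_sub_exp_neg_KL hp0 hp1 hq0 hq1 hac)
  refine ⟨(le_abs_self _).trans hTV, (le_abs_self _).trans (hTV.trans (sqrt_le_sqrt ?_))⟩
  linarith [one_sub_le_exp_neg (KL p q)]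
end
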